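/- arXiv:1810.06800 — 3 statements merged into one kernel-verified Lean document; each statement's English description precedes it below -/
import Mathlib

section
/- Let L, k be positive integers with k ≤ L. Consider a cyclic lattice Z/L ('1D torus') and a set of pairwise disjoint k-mers (each k-mer occupies k consecutive sites modulo L). If the configuration is jammed, i.e., every set of k consecutive sites contains at least one occupied site, then the number of occupied sites is at least k·L/(2k−1). -/
/-- A k-mer on the cyclic lattice `ZMod L` starting at `i`:
the `k` consecutive sites `i, i+1, …, i+k-1` (mod `L`). -/
def kmer1 (L k : ℕ) (i : ZMod L) : Set (ZMod L) :=
  {s | ∃ j : ℕ, j < k ∧ s = i + (j : ZMod L)}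

/-- A 1D configuration: a family of pairwise disjoint k-mers. -/
def IsConfig1 (L k : ℕ) (C : Set (Set (ZMod L))) : Prop :=
  (∀ m ∈ C, ∃ i : ZMod L, m = kmer1 L k i) ∧ C.Pairwise Disjoint

/-- Jammed: no further k-mer can be placed on empty sites; equivalently every
window of `k` consecutive sites contains an occupied site. -/
def IsJammed1 (L k : ℕ) (C : Set (Set (ZMod L))) : Prop :=
  IsConfig1 L k C ∧ ∀ i : ZMod L, ¬ Disjoint (kmer1 L k i) (⋃₀ C)

/-- Any jammed configuration of disjoint k-mers on the 1D torus `ZMod L`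
has at least `k·L/(2k−1)` occupied sites. -/
theorem jammed_1d_coverage_lower_bound (L k : ℕ) (hL : 0 < L) (hk : 0 < k)
    (hkL : k ≤ L) (C : Set (Set (ZMod L))) (hC : IsJammed1 L k C) :
    k * L ≤ (⋃₀ C).ncard * (2 * k - 1) := by
  haveI : NeZero L := ⟨hL.ne'⟩
  obtain ⟨⟨hmem, hdisj⟩, hjam⟩ := hC
  -- total choice of a start for each k-mer
  have hmem' : ∀ m : Set (ZMod L), ∃ i : ZMod L, m ∈ C → m = kmer1 L k i := by
    intro m
    by_cases hm : m ∈ C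
    · obtain ⟨i, hi⟩ := hmem m hm
      exact ⟨i, fun _ => hi⟩
    · exact ⟨0, fun h => absurd h hm⟩
  choose a ha using hmem'
  -- data from jammedness
  have hjam' : ∀ i : ZMod L, ∃ s, s ∈ kmer1 L k i ∧ s ∈ ⋃₀ C :=
    fun i => Set.not_disjoint_iff.mp (hjam i)
  choose s hs1 hs2 using hjam'
  choose j hj1 hj2 using hs1
  choose M hM1 hM2 using hs2
  -- write s i as a (M i) + t i
  have hst : ∀ i : ZMod L, ∃ t, t < k ∧ s i = a (M i) + (t : ZMod L) := by
    intro i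
    have := hM2 i
    rw [ha (M i) (hM1 i)] at this
    exact this
  choose t ht1 ht2 using hst
  -- C is finite
  have hCfin : Finite ↥C := by
    apply Finite.of_injective (fun m : ↥C => a m.1)
    intro m m' h
    have h' : a m.1 = a m'.1 := h
    apply Subtype.ext
    rw [ha m.1 m.2, ha m'.1 m'.2, h']
  have hOfin : Finite ↥(⋃₀ C) := Subtype.finite
  -- cast injectivity on [0, k)
  have castinj : ∀ u v : ℕ, u < k → v < k → (u : ZMod L) = (v : ZMod L) → u = v := by
    intro u v hu hv h
    have := congrArg ZMod.val h
    rwa [ZMod.val_cast_of_lt (lt_of_lt_of_le hu hkL),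
      ZMod.val_cast_of_lt (lt_of_lt_of_le hv hkL)] at this
  -- injection ZMod L → C × Fin (2k-1)
  have hF : ∀ i : ZMod L, i = a (M i) + ((t i + (k - 1) - j i : ℕ) : ZMod L)
      - ((k - 1 : ℕ) : ZMod L) := by
    intro i
    have h1 : j i ≤ t i + (k - 1) := by have := hj1 i; omega
    have h2 : (((t i + (k - 1) - j i : ℕ)) : ZMod L)
        = (t i : ZMod L) + ((k - 1 : ℕ) : ZMod L) - (j i : ZMod L) := by
      push_cast [Nat.cast_sub h1]
      ring
    have h3 : s i = i + (j i : ZMod L) := hj2 i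
    have h4 : s i = a (M i) + (t i : ZMod L) := ht2 i
    have h5 : i = a (M i) + (t i : ZMod L) - (j i : ZMod L) := by
      rw [← h4, h3]; ring
    rw [h2]
    linear_combination h5
  have hL1 : L ≤ Nat.card ↥C * (2 * k - 1) := by
    have hinj : Function.Injective
        (fun i : ZMod L => ((⟨M i, hM1 i⟩ : ↥C),
          (⟨t i + (k - 1) - j i, by have := ht1 i; have := hj1 i; omega⟩ : Fin (2 * k - 1)))) := by
      intro i i' h
      have hm : M i = M i' := congrArg (fun p => (Prod.fst p).1) h
      have hd : t i + (k - 1) - j i = t i' + (k - 1) - j i' :=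
        congrArg (fun p => (Prod.snd p).1) h
      rw [hF i, hF i', hm, hd]
    calc L = Nat.card (ZMod L) := (Nat.card_zmod L).symm
    _ ≤ Nat.card (↥C × Fin (2 * k - 1)) := Nat.card_le_card_of_injective _ hinj
    _ = Nat.card ↥C * (2 * k - 1) := by
        simp [Nat.card_prod]
  -- injection C × Fin k → ⋃₀ C
  have hL2 : Nat.card ↥C * k ≤ (⋃₀ C).ncard := by
    have hmemO : ∀ (m : ↥C) (u : Fin k), a m.1 + (u.1 : ZMod L) ∈ ⋃₀ C := by
      intro m u
      have hmm : a m.1 + (u.1 : ZMod L) ∈ kmer1 L k (a m.1) := ⟨u.1, u.2, rfl⟩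
      rw [← ha m.1 m.2] at hmm
      exact ⟨m.1, m.2, hmm⟩
    have hinj : Function.Injective
        (fun p : ↥C × Fin k => (⟨a p.1.1 + (p.2.1 : ZMod L), hmemO p.1 p.2⟩ : ↥(⋃₀ C))) := by
      rintro ⟨m, u⟩ ⟨m', u'⟩ h
      have h' : a m.1 + (u.1 : ZMod L) = a m'.1 + (u'.1 : ZMod L) := congrArg Subtype.val h
      have hmm : m = m' := by
        by_contra hne
        have hne' : m.1 ≠ m'.1 := fun hh => hne (Subtype.ext hh)
        have hd := hdisj m.2 m'.2 hne'
        have hx1 : a m.1 + (u.1 : ZMod L) ∈ m.1 := by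
          have hmm : a m.1 + (u.1 : ZMod L) ∈ kmer1 L k (a m.1) := ⟨u.1, u.2, rfl⟩
          rwa [← ha m.1 m.2] at hmm
        have hx2 : a m.1 + (u.1 : ZMod L) ∈ m'.1 := by
          have hmm : a m'.1 + (u'.1 : ZMod L) ∈ kmer1 L k (a m'.1) := ⟨u'.1, u'.2, rfl⟩
          rw [← ha m'.1 m'.2] at hmm
          rwa [h']
        exact Set.disjoint_left.mp hd hx1 hx2
      subst hmm
      have : (u.1 : ZMod L) = (u'.1 : ZMod L) := add_left_cancel h'
      have := castinj u.1 u'.1 u.2 u'.2 this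
      exact Prod.ext rfl (Fin.ext this)
    calc Nat.card ↥C * k = Nat.card (↥C × Fin k) := by
          simp [Nat.card_prod]
    _ ≤ Nat.card ↥(⋃₀ C) := Nat.card_le_card_of_injective _ hinj
    _ = (⋃₀ C).ncard := Nat.card_coe_set_eq _
  calc k * L ≤ k * (Nat.card ↥C * (2 * k - 1)) := Nat.mul_le_mul_left k hL1
  _ = (Nat.card ↥C * k) * (2 * k - 1) := by ring
  _ ≤ (⋃₀ C).ncard * (2 * k - 1) := Nat.mul_le_mul_right _ hL2
end

section
/- Let L, k be positive integers with k ≤ L. Any jammed configuration of non-overlapping horizontal or vertical k-mers on the L × L torus has at least L·⌈L/k⌉ occupied sites; in particular its coverage is at least 1/k. -/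
/-- A horizontal k-mer on the `L × L` torus with parent site `(x, y)`. -/
def hKmer (L k : ℕ) (x y : ZMod L) : Set (ZMod L × ZMod L) :=
  {s | ∃ j : ℕ, j < k ∧ s = (x + (j : ZMod L), y)}

/-- A vertical k-mer on the `L × L` torus with parent site `(x, y)`. -/
def vKmer (L k : ℕ) (x y : ZMod L) : Set (ZMod L × ZMod L) :=
  {s | ∃ j : ℕ, j < k ∧ s = (x, y + (j : ZMod L))}

/-- A set of sites is a (horizontal or vertical) k-mer. -/
def IsKmer (L k : ℕ) (m : Set (ZMod L × ZMod L)) : Prop :=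
  ∃ x y : ZMod L, m = hKmer L k x y ∨ m = vKmer L k x y

/-- A configuration: a family of pairwise disjoint k-mers. -/
def IsConfig (L k : ℕ) (C : Set (Set (ZMod L × ZMod L))) : Prop :=
  (∀ m ∈ C, IsKmer L k m) ∧ C.Pairwise Disjoint

/-- A jammed configuration: no further k-mer fits entirely on empty sites. -/
def IsJammed (L k : ℕ) (C : Set (Set (ZMod L × ZMod L))) : Prop :=
  IsConfig L k C ∧ ∀ m, IsKmer L k m → ¬ Disjoint m (⋃₀ C)

/-- Toroidal nearest-neighbor adjacency. -/
def Adj (L : ℕ) (a b : ZMod L × ZMod L) : Prop :=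
  b - a ∈ ({((1 : ZMod L), (0 : ZMod L)), (-1, 0), (0, 1), (0, -1)} :
    Set (ZMod L × ZMod L))

/-- `Cl` is a cluster (connected component) of the set `occ` of occupied sites. -/
def IsCluster (L : ℕ) (occ Cl : Set (ZMod L × ZMod L)) : Prop :=
  ∃ a ∈ occ, Cl =
    {b | b ∈ occ ∧ Relation.ReflTransGen (fun p q => p ∈ occ ∧ q ∈ occ ∧ Adj L p q) a b}

/-- Reduction of an integer vector modulo `L` in both coordinates. -/
def castPair (L : ℕ) (v : ℤ × ℤ) : ZMod L × ZMod L := ((v.1 : ZMod L), (v.2 : ZMod L))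

/-- Unit steps in `ℤ²`. -/
def IsUnitStep (v : ℤ × ℤ) : Prop := v = (1, 0) ∨ v = (-1, 0) ∨ v = (0, 1) ∨ v = (0, -1)

/-- `S` wraps around the torus: it contains a closed nearest-neighbor walk whose
net winding vector (sum of the `ℤ²` lifts of its steps) is nonzero. -/
def Wraps (L : ℕ) (S : Set (ZMod L × ZMod L)) : Prop :=
  ∃ (x : ZMod L × ZMod L) (n : ℕ) (d : Fin n → ℤ × ℤ),
    (∀ i, IsUnitStep (d i)) ∧
    (∀ m : ℕ, m ≤ n → x + castPair L (∑ i : Fin n, if (i : ℕ) < m then d i else 0) ∈ S) ∧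
    castPair L (∑ i, d i) = 0 ∧ (∑ i, d i) ≠ 0

/-- Any jammed configuration of non-overlapping horizontal or vertical k-mers on the
`L × L` torus has at least `L·⌈L/k⌉` occupied sites; in particular its coverage is
at least `1/k`. -/
theorem jammed_torus_coverage_lower_bound (L k : ℕ) (hL : 0 < L) (hk : 0 < k)
    (hkL : k ≤ L) (C : Set (Set (ZMod L × ZMod L))) (hC : IsJammed L k C) :
    L * ((L + k - 1) / k) ≤ (⋃₀ C).ncard ∧ L ^ 2 ≤ (⋃₀ C).ncard * k := by

  classical
  haveI : NeZero L := ⟨hL.ne'⟩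
  set occ := ⋃₀ C with hocc
  have hfin : occ.Finite := Set.toFinite _
  set F : Finset (ZMod L × ZMod L) := hfin.toFinset with hF
  have hmemF : ∀ a, a ∈ F ↔ a ∈ occ := fun a => hfin.mem_toFinset
  have hjam : ∀ x y : ZMod L, ∃ j : ℕ, j < k ∧ (x + (j : ZMod L), y) ∈ occ := by
    intro x y
    have h := hC.2 (hKmer L k x y) ⟨x, y, Or.inl rfl⟩
    rw [Set.not_disjoint_iff] at h
    obtain ⟨s, hs1, hs2⟩ := h
    obtain ⟨j, hj, rfl⟩ := hs1
    exact ⟨j, hj, hs2⟩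
  have hrow : ∀ y : ZMod L, L ≤ (F.filter (fun s => s.2 = y)).card * k := by
    intro y
    set T : Finset (ZMod L) := (F.filter (fun s => s.2 = y)).image Prod.fst with hT
    have hTcard : T.card ≤ (F.filter (fun s => s.2 = y)).card := Finset.card_image_le
    have hcover : (Finset.univ : Finset (ZMod L)) ⊆
        T.biUnion (fun t => (Finset.range k).image (fun j : ℕ => t - (j : ZMod L))) := by
      intro x _
      obtain ⟨j, hj, hmem⟩ := hjam x y
      refine Finset.mem_biUnion.2 ⟨x + (j : ZMod L), ?_, ?_⟩
      · exact Finset.mem_image.2 ⟨(x + (j : ZMod L), y),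
          Finset.mem_filter.2 ⟨(hmemF _).2 hmem, rfl⟩, rfl⟩
      · exact Finset.mem_image.2 ⟨j, Finset.mem_range.2 hj, by ring⟩
    have h1 : (Finset.univ : Finset (ZMod L)).card ≤ T.card * k := by
      calc (Finset.univ : Finset (ZMod L)).card
          ≤ (T.biUnion (fun t => (Finset.range k).image (fun j : ℕ => t - (j : ZMod L)))).card :=
            Finset.card_le_card hcover
        _ ≤ ∑ t ∈ T, ((Finset.range k).image (fun j : ℕ => t - (j : ZMod L))).card :=
            Finset.card_biUnion_le
        _ ≤ ∑ _t ∈ T, k := Finset.sum_le_sum (fun t _ =>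
            le_trans Finset.card_image_le (by simp))
        _ = T.card * k := by rw [Finset.sum_const, smul_eq_mul]
    rw [Finset.card_univ, ZMod.card] at h1
    exact h1.trans (Nat.mul_le_mul_right k hTcard)
  have hsum : F.card = ∑ y : ZMod L, (F.filter (fun s => s.2 = y)).card :=
    Finset.card_eq_sum_card_fiberwise (fun a _ => Finset.mem_univ a.2)
  have hdiv : ∀ n : ℕ, L ≤ n * k → (L + k - 1) / k ≤ n := by
    intro n h
    rw [← Nat.lt_succ_iff, Nat.div_lt_iff_lt_mul hk]
    have h2 : Nat.succ n * k = n * k + k := Nat.succ_mul n k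
    omega
  have hncard : occ.ncard = F.card := Set.ncard_eq_toFinset_card _ hfin
  constructor
  · rw [hncard, hsum]
    calc L * ((L + k - 1) / k) = ∑ _y : ZMod L, (L + k - 1) / k := by
          rw [Finset.sum_const, Finset.card_univ, ZMod.card, smul_eq_mul]
      _ ≤ ∑ y : ZMod L, (F.filter (fun s => s.2 = y)).card :=
          Finset.sum_le_sum (fun y _ => hdiv _ (hrow y))
  · rw [hncard, hsum, Finset.sum_mul, pow_two]
    calc L * L = ∑ _y : ZMod L, L := by
          rw [Finset.sum_const, Finset.card_univ, ZMod.card, smul_eq_mul]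
      _ ≤ ∑ y : ZMod L, (F.filter (fun s => s.2 = y)).card * k :=
          Finset.sum_le_sum (fun y _ => hrow y)
end

section
/- Every cluster in any jammed configuration of fixed-length non-overlapping horizontal or vertical k-mers on the L × L torus (k ≤ L) is a wrapping (percolating) cluster: it contains a closed walk of nearest-neighbor steps whose net winding vector in Z² is nonzero. -/
/-!
If the cluster does not wrap, its lift to `ℤ²` (endpoints of lifted walks from a base site)
projects injectively to the torus, so it is finite. At a Pareto-maximal point of the lift the
k-mer through it lifts to a segment ending there, horizontal or vertical. Jamming puts a lifted
point just above every such horizontal segment and just right of every such vertical one.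
Walking down the staircase of maximal points, this forces a horizontal and a vertical segment
to cross; they then lie in the same k-mer, and a vertical k-mer cannot contain two sites of one
row at horizontal distance `0 < d < k ≤ L`.
-/
open Relation

@[simp]
lemma castPair_add (L : ℕ) (u v : ℤ × ℤ) :
    castPair L (u + v) = castPair L u + castPair L v := by
  simp [castPair]

@[simp]
lemma castPair_sub (L : ℕ) (u v : ℤ × ℤ) :
    castPair L (u - v) = castPair L u - castPair L v := by
  simp [castPair]

@[simp]
lemma castPair_nsmul (L j : ℕ) (v : ℤ × ℤ) : castPair L (j • v) = j • castPair L v := by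
  simp [castPair]

@[simp]
lemma castPair_zero (L : ℕ) : castPair L 0 = 0 := by
  simp [castPair]

lemma IsUnitStep.neg {v : ℤ × ℤ} (h : IsUnitStep v) : IsUnitStep (-v) := by
  rcases h with rfl | rfl | rfl | rfl <;> simp [IsUnitStep]

lemma adj_add_castPair (L : ℕ) (q : ZMod L × ZMod L) {e : ℤ × ℤ} (he : IsUnitStep e) :
    Adj L q (q + castPair L e) := by
  rw [Adj, add_sub_cancel_left]
  rcases he with rfl | rfl | rfl | rfl <;> simp [castPair]

lemma IsCluster.nonempty {L : ℕ} {occ Cl : Set (ZMod L × ZMod L)} (hCl : IsCluster L occ Cl) :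
    Cl.Nonempty := by
  obtain ⟨a, ha, rfl⟩ := hCl
  exact ⟨a, ha, .refl⟩

lemma IsCluster.subset {L : ℕ} {occ Cl : Set (ZMod L × ZMod L)} (hCl : IsCluster L occ Cl) :
    Cl ⊆ occ := by
  obtain ⟨a, -, rfl⟩ := hCl
  exact fun _ hb => hb.1

lemma IsCluster.mem_of_adj {L : ℕ} {occ Cl : Set (ZMod L × ZMod L)} (hCl : IsCluster L occ Cl)
    {p q : ZMod L × ZMod L} (hp : p ∈ Cl) (hq : q ∈ occ) (hpq : Adj L p q) : q ∈ Cl := by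
  obtain ⟨a, -, rfl⟩ := hCl
  exact ⟨hq, hp.2.tail ⟨hp.1, hq, hpq⟩⟩

lemma sum_ite_lt_of_le {n m : ℕ} (d : Fin n → ℤ × ℤ) (h : n ≤ m) :
    (∑ i : Fin n, if (i : ℕ) < m then d i else 0) = ∑ i, d i :=
  Finset.sum_congr rfl fun i _ => if_pos (by omega)

lemma sum_snoc_ite {n : ℕ} (d : Fin n → ℤ × ℤ) (e : ℤ × ℤ) (m : ℕ) :
    (∑ i : Fin (n + 1), if (i : ℕ) < m then Fin.snoc (α := fun _ => ℤ × ℤ) d e i else 0) =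
      (∑ i : Fin n, if (i : ℕ) < m then d i else 0) + if n < m then e else 0 := by
  simp [Fin.sum_univ_castSucc]

def LiftAdj (L : ℕ) (S : Set (ZMod L × ZMod L)) (x : ZMod L × ZMod L) (u v : ℤ × ℤ) : Prop :=
  IsUnitStep (v - u) ∧ x + castPair L u ∈ S ∧ x + castPair L v ∈ S

/-- The lift to the universal cover `ℤ²` of the component of `x` in `S`, with `x` lifted to `0`. -/
def liftedComponent (L : ℕ) (S : Set (ZMod L × ZMod L)) (x : ZMod L × ZMod L) : Set (ℤ × ℤ) :=
  {v | ReflTransGen (LiftAdj L S x) 0 v}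

section Lift

variable {L : ℕ} {S : Set (ZMod L × ZMod L)} {x : ZMod L × ZMod L}

lemma LiftAdj.symm {u v : ℤ × ℤ} (h : LiftAdj L S x u v) : LiftAdj L S x v u :=
  ⟨by simpa using h.1.neg, h.2.2, h.2.1⟩

lemma LiftAdj.add_right {t u v : ℤ × ℤ} (ht : castPair L t = 0) (h : LiftAdj L S x u v) :
    LiftAdj L S x (u + t) (v + t) :=
  ⟨by simpa using h.1, by simpa [ht] using h.2.1, by simpa [ht] using h.2.2⟩

lemma reflTransGen_liftAdj_symm {u v : ℤ × ℤ} (h : ReflTransGen (LiftAdj L S x) u v) :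
    ReflTransGen (LiftAdj L S x) v u := by
  induction h with
  | refl => rfl
  | tail _ hbc ih => exact ih.head hbc.symm

lemma mem_of_mem_liftedComponent (hx : x ∈ S) {v : ℤ × ℤ} (hv : v ∈ liftedComponent L S x) :
    x + castPair L v ∈ S := by
  rcases hv.cases_tail with rfl | ⟨_, -, h⟩
  · simpa using hx
  · exact h.2.2

lemma add_mem_liftedComponent (hx : x ∈ S) {v e : ℤ × ℤ} (hv : v ∈ liftedComponent L S x)
    (he : IsUnitStep e) (hve : x + castPair L (v + e) ∈ S) : v + e ∈ liftedComponent L S x :=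
  ReflTransGen.tail hv ⟨by simpa using he, mem_of_mem_liftedComponent hx hv, hve⟩

/-- Go to `u`, then retrace the walk to `v` backwards, shifted by the period `u - v`. -/
lemma sub_mem_liftedComponent {u v : ℤ × ℤ} (hu : u ∈ liftedComponent L S x)
    (hv : v ∈ liftedComponent L S x) (huv : castPair L u = castPair L v) :
    u - v ∈ liftedComponent L S x := by
  have hper : castPair L (u - v) = 0 := by simp [huv]
  have hback : ReflTransGen (LiftAdj L S x) (v + (u - v)) (0 + (u - v)) :=
    (reflTransGen_liftAdj_symm hv).lift (· + (u - v)) fun _ _ h => h.add_right hper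
  exact ReflTransGen.trans hu (by simpa using hback)

lemma exists_walk_of_mem_liftedComponent (hx : x ∈ S) {v : ℤ × ℤ}
    (hv : v ∈ liftedComponent L S x) :
    ∃ (n : ℕ) (d : Fin n → ℤ × ℤ), (∀ i, IsUnitStep (d i)) ∧
      (∀ m ≤ n, x + castPair L (∑ i : Fin n, if (i : ℕ) < m then d i else 0) ∈ S) ∧
      ∑ i, d i = v := by
  induction hv with
  | refl => exact ⟨0, Fin.elim0, fun i => i.elim0, fun m _ => by simpa using hx, by simp⟩
  | @tail b c _ hbc ih =>
    obtain ⟨n, d, hd, hpart, hsum⟩ := ih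
    refine ⟨n + 1, Fin.snoc d (c - b), fun i => ?_, fun m hm => ?_, ?_⟩
    · refine Fin.lastCases ?_ (fun i => ?_) i <;> simp [hd, hbc.1]
    · rw [sum_snoc_ite]
      rcases hm.lt_or_eq with hm | rfl
      · simpa [show ¬ n < m by omega] using hpart m (by omega)
      · simpa [sum_ite_lt_of_le d n.le_succ, hsum] using hbc.2.2
    · simp [Fin.sum_snoc, hsum]

lemma wraps_of_mem_liftedComponent (hx : x ∈ S) {v : ℤ × ℤ} (hv : v ∈ liftedComponent L S x)
    (hv0 : castPair L v = 0) (hne : v ≠ 0) : Wraps L S := by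
  obtain ⟨n, d, hd, hpart, rfl⟩ := exists_walk_of_mem_liftedComponent hx hv
  exact ⟨x, n, d, hd, hpart, hv0, hne⟩

lemma injOn_castPair_liftedComponent (hx : x ∈ S) (hS : ¬ Wraps L S) :
    Set.InjOn (castPair L) (liftedComponent L S x) := fun u hu v hv huv =>
  sub_eq_zero.mp <| by_contra fun hne =>
    hS <| wraps_of_mem_liftedComponent hx (sub_mem_liftedComponent hu hv huv) (by simp [huv]) hne

lemma finite_liftedComponent [NeZero L] (hx : x ∈ S) (hS : ¬ Wraps L S) :
    (liftedComponent L S x).Finite :=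
  Set.Finite.of_finite_image (Set.toFinite _) (injOn_castPair_liftedComponent hx hS)

end Lift

def kmerAlong (L k : ℕ) (p : ZMod L × ZMod L) (e : ℤ × ℤ) : Set (ZMod L × ZMod L) :=
  {s | ∃ j : ℕ, j < k ∧ s = p + castPair L (j • e)}

def IsAxis (e : ℤ × ℤ) : Prop := e = (1, 0) ∨ e = (0, 1)

lemma IsAxis.isUnitStep {e : ℤ × ℤ} (he : IsAxis e) : IsUnitStep e := by
  rcases he with rfl | rfl <;> simp [IsUnitStep]

lemma IsAxis.lt_add {e : ℤ × ℤ} (he : IsAxis e) (w : ℤ × ℤ) : w < w + e := by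
  rcases he with rfl | rfl <;> simp [Prod.lt_iff]

lemma isKmer_iff {L k : ℕ} {m : Set (ZMod L × ZMod L)} :
    IsKmer L k m ↔ ∃ p e, IsAxis e ∧ m = kmerAlong L k p e := by
  have hh (a b : ZMod L) : hKmer L k a b = kmerAlong L k (a, b) (1, 0) := by
    ext; simp [hKmer, kmerAlong, castPair]
  have hv (a b : ZMod L) : vKmer L k a b = kmerAlong L k (a, b) (0, 1) := by
    ext; simp [vKmer, kmerAlong, castPair]
  constructor
  · rintro ⟨a, b, rfl | rfl⟩
    exacts [⟨(a, b), _, Or.inl rfl, hh a b⟩, ⟨(a, b), _, Or.inr rfl, hv a b⟩]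
  · rintro ⟨⟨a, b⟩, e, rfl | rfl, rfl⟩
    exacts [⟨a, b, Or.inl (hh a b).symm⟩, ⟨a, b, Or.inr (hv a b).symm⟩]

lemma dvd_of_mem_kmerAlong_vertical {L k d : ℕ} {p s : ZMod L × ZMod L}
    (hs : s ∈ kmerAlong L k p (0, 1)) (ht : s - castPair L (d • (1, 0)) ∈ kmerAlong L k p (0, 1)) :
    L ∣ d := by
  obtain ⟨i, -, rfl⟩ := hs
  obtain ⟨j, -, hj⟩ := ht
  have hd0 : (d : ZMod L) = 0 := by simpa [castPair] using congrArg Prod.fst hj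
  exact (ZMod.natCast_eq_zero_iff d L).mp hd0

def IsLiftEnd (L k : ℕ) (T : Set (ℤ × ℤ)) (x : ZMod L × ZMod L) (m : Set (ZMod L × ZMod L))
    (e w : ℤ × ℤ) : Prop :=
  ∀ j < k, w - j • e ∈ T ∧ x + castPair L (w - j • e) ∈ m

section Cluster

variable {L k : ℕ} {occ Cl : Set (ZMod L × ZMod L)} {x : ZMod L × ZMod L}

lemma IsCluster.add_mem_liftedComponent (hCl : IsCluster L occ Cl) (hx : x ∈ Cl) {v e : ℤ × ℤ}
    (hv : v ∈ liftedComponent L Cl x) (he : IsUnitStep e) (hve : x + castPair L (v + e) ∈ occ) :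
    v + e ∈ liftedComponent L Cl x := by
  refine _root_.add_mem_liftedComponent hx hv he
    (hCl.mem_of_adj (mem_of_mem_liftedComponent hx hv) hve ?_)
  simpa [add_assoc] using adj_add_castPair L (x + castPair L v) he

/-- As `w + e` is not lifted, the site of `w` is the last one of its k-mer, and the k-mer lifts
backwards from `w`. -/
lemma IsCluster.isLiftEnd (hCl : IsCluster L occ Cl) (hx : x ∈ Cl) {p : ZMod L × ZMod L}
    {e w : ℤ × ℤ} (he : IsAxis e) (hm : kmerAlong L k p e ⊆ occ)
    (hw : w ∈ liftedComponent L Cl x) (hwm : x + castPair L w ∈ kmerAlong L k p e)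
    (hwe : w + e ∉ liftedComponent L Cl x) :
    IsLiftEnd L k (liftedComponent L Cl x) x (kmerAlong L k p e) e w := by
  obtain ⟨j₀, hj₀, hsite⟩ := hwm
  have hend : j₀ + 1 = k := by
    by_contra hne
    refine hwe (hCl.add_mem_liftedComponent hx hw he.isUnitStep (hm ⟨j₀ + 1, by omega, ?_⟩))
    rw [castPair_add, ← add_assoc, hsite, succ_nsmul, castPair_add, add_assoc]
  intro j hj
  induction j with
  | zero => simpa using ⟨hw, j₀, hj₀, hsite⟩
  | succ j ih =>
    have hsite' : x + castPair L (w - (j + 1) • e) ∈ kmerAlong L k p e := by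
      refine ⟨j₀ - (j + 1), by omega, ?_⟩
      rw [castPair_sub, ← add_sub_assoc, hsite, castPair_nsmul, castPair_nsmul, castPair_nsmul,
        sub_nsmul _ (by omega : j + 1 ≤ j₀)]
      abel
    have hstep : w - (j + 1) • e = w - j • e + -e := by rw [succ_nsmul]; abel
    refine ⟨?_, hsite'⟩
    rw [hstep] at hsite' ⊢
    exact hCl.add_mem_liftedComponent hx (ih (by omega)).1 he.isUnitStep.neg (hm hsite')

end Cluster

section Jammed

variable {L k : ℕ} {C : Set (Set (ZMod L × ZMod L))} {Cl : Set (ZMod L × ZMod L)}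
  {x : ZMod L × ZMod L}

lemma IsCluster.exists_isLiftEnd_of_maximal (hCl : IsCluster L (⋃₀ C) Cl)
    (hkmer : ∀ m ∈ C, IsKmer L k m) (hx : x ∈ Cl) {w : ℤ × ℤ}
    (hw : Maximal (· ∈ liftedComponent L Cl x) w) :
    ∃ m ∈ C, ∃ p e, IsAxis e ∧ m = kmerAlong L k p e ∧
      IsLiftEnd L k (liftedComponent L Cl x) x m e w := by
  obtain ⟨m, hm, hwm⟩ := hCl.subset (mem_of_mem_liftedComponent hx hw.1)
  obtain ⟨p, e, he, rfl⟩ := isKmer_iff.mp (hkmer m hm)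
  refine ⟨_, hm, p, e, he, rfl,
    hCl.isLiftEnd hx he (Set.subset_sUnion_of_mem hm) hw.1 hwm fun hwe => ?_⟩
  exact (he.lt_add w).not_ge (hw.2 hwe (he.lt_add w).le)

/-- Jamming: the `k` sites obtained by shifting a lifted k-mer sideways by `f` are not all
empty, and an occupied one is adjacent to the k-mer, hence in the cluster. -/
lemma IsJammed.exists_shift_mem_liftedComponent (hC : IsJammed L k C)
    (hCl : IsCluster L (⋃₀ C) Cl) (hx : x ∈ Cl) {e f w : ℤ × ℤ} (he : IsAxis e)
    (hf : IsUnitStep f) (hseg : ∀ j < k, w - j • e ∈ liftedComponent L Cl x) :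
    ∃ j < k, w - j • e + f ∈ liftedComponent L Cl x := by
  obtain ⟨s, ⟨i, hi, rfl⟩, hs⟩ := Set.not_disjoint_iff.mp
    (hC.2 _ (isKmer_iff.mpr ⟨x + castPair L (w - (k - 1) • e + f), e, he, rfl⟩))
  refine ⟨k - 1 - i, by omega, hCl.add_mem_liftedComponent hx (hseg _ (by omega)) hf ?_⟩
  have hshift : w - (k - 1 - i) • e + f = w - (k - 1) • e + f + i • e := by
    have hsplit : (k - 1) • e = (k - 1 - i) • e + i • e := by
      rw [← add_nsmul, Nat.sub_add_cancel (by omega)]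
    rw [hsplit]
    abel
  simpa only [hshift, castPair_add, add_assoc] using hs

end Jammed

section Staircase

variable {T : Set (ℤ × ℤ)} {k : ℕ} {Hor Ver : ℤ × ℤ → Prop}

/-- A maximal point of largest first coordinate is not of type `Ver`, which would put a point of
`T` to its right. -/
lemma exists_maximal_hor (hT : T.Finite) (hne : T.Nonempty)
    (hHV : ∀ w, Maximal (· ∈ T) w → Hor w ∨ Ver w)
    (hVer : ∀ w, Maximal (· ∈ T) w → Ver w → ∃ j < k, w - j • (0, 1) + (1, 0) ∈ T) :
    ∃ w, Maximal (· ∈ T) w ∧ Hor w := by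
  obtain ⟨v, hv, hvmax⟩ := T.exists_max_image Prod.fst hT hne
  obtain ⟨w, hvw, hw⟩ := hT.exists_le_maximal hv
  refine ⟨w, hw, (hHV w hw).resolve_right fun hwVer => ?_⟩
  obtain ⟨j, -, hj⟩ := hVer w hw hwVer
  have hright : w.1 < v.1 := by simpa using hvmax _ hj
  exact hright.not_ge hvw.1

/-- Take `a` the highest maximal point of type `Hor` and `b` the rightmost maximal point above
`a`. The point of `T` above `a`'s segment gives `a.1 - k < b.1`; the point right of `b`'s
segment is not above `a`, which gives `b.2 < a.2 + k`. -/
theorem exists_crossing_of_maximal (hT : T.Finite) (hne : T.Nonempty)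
    (hHV : ∀ w, Maximal (· ∈ T) w → Hor w ∨ Ver w)
    (hHor : ∀ w, Maximal (· ∈ T) w → Hor w → ∃ j < k, w - j • (1, 0) + (0, 1) ∈ T)
    (hVer : ∀ w, Maximal (· ∈ T) w → Ver w → ∃ j < k, w - j • (0, 1) + (1, 0) ∈ T) :
    ∃ a b : ℤ × ℤ, ∃ d d' : ℕ, Hor a ∧ Ver b ∧ 0 < d ∧ d < k ∧ d' < k ∧
      a - d • (1, 0) = b - d' • (0, 1) := by
  obtain ⟨a, ⟨ha, haHor⟩, hatop⟩ := Set.exists_max_image {w | Maximal (· ∈ T) w ∧ Hor w}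
    Prod.snd (hT.subset fun w hw => hw.1.1) (exists_maximal_hor hT hne hHV hVer)
  obtain ⟨j₁, hj₁, hz₁⟩ := hHor a ha haHor
  have hDne : {w | Maximal (· ∈ T) w ∧ a.2 < w.2}.Nonempty := by
    obtain ⟨w, hzw, hw⟩ := hT.exists_le_maximal hz₁
    exact ⟨w, hw, by simpa using hzw.2⟩
  obtain ⟨b, ⟨hb, hab⟩, hbright⟩ := Set.exists_max_image _ Prod.fst
    (hT.subset fun w hw => hw.1.1) hDne
  have habove : ∀ u ∈ T, a.2 < u.2 → u.1 ≤ b.1 := fun u hu hau => by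
    obtain ⟨w, huw, hw⟩ := hT.exists_le_maximal hu
    exact huw.1.trans (hbright w ⟨hw, hau.trans_le huw.2⟩)
  have hbVer : Ver b :=
    (hHV b hb).resolve_left fun hbHor => (hatop b ⟨hb, hbHor⟩).not_gt hab
  obtain ⟨j₂, hj₂, hz₂⟩ := hVer b hb hbVer
  have h₁ : a.1 - j₁ ≤ b.1 := by simpa using habove _ hz₁ (by simp)
  have h₂ : b.2 - j₂ ≤ a.2 := le_of_not_gt fun h => by
    simpa using habove _ hz₂ (by simpa using h)
  have hba : b.1 < a.1 := lt_of_not_ge fun h => hab.not_ge (ha.2 hb.1 ⟨h, hab.le⟩).2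
  refine ⟨a, b, (a.1 - b.1).toNat, (b.2 - a.2).toNat, haHor, hbVer, by omega, by omega,
    by omega, ?_⟩
  ext <;> simp <;> omega

end Staircase

theorem jammed_cluster_wraps_general (L k : ℕ) (hL : 0 < L) (hkL : k ≤ L)
    (C : Set (Set (ZMod L × ZMod L))) (hC : IsJammed L k C)
    (Cl : Set (ZMod L × ZMod L)) (hCl : IsCluster L (⋃₀ C) Cl) :
    Wraps L Cl := by
  have : NeZero L := ⟨hL.ne'⟩
  obtain ⟨x, hx⟩ := hCl.nonempty
  by_contra hS
  set T := liftedComponent L Cl x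
  obtain ⟨a, b, d, d', ⟨mH, hmH, hH⟩, ⟨_, hmV, ⟨p, rfl⟩, hV⟩, hd, hdk, hd'k, hab⟩ :=
    exists_crossing_of_maximal (finite_liftedComponent hx hS) ⟨0, .refl⟩ (k := k)
      (Hor := fun w => ∃ m ∈ C, IsLiftEnd L k T x m (1, 0) w)
      (Ver := fun w => ∃ m ∈ C, (∃ p, m = kmerAlong L k p (0, 1)) ∧ IsLiftEnd L k T x m (0, 1) w)
      (fun w hw => by
        obtain ⟨m, hm, p, e, he | he, rfl, hseg⟩ := hCl.exists_isLiftEnd_of_maximal hC.1.1 hx hw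
        exacts [.inl ⟨_, hm, he ▸ hseg⟩, .inr ⟨_, hm, ⟨p, he ▸ rfl⟩, he ▸ hseg⟩])
      (fun w _ ⟨_, _, hseg⟩ => hC.exists_shift_mem_liftedComponent hCl hx (.inl rfl)
        (by simp [IsUnitStep]) fun j hj => (hseg j hj).1)
      (fun w _ ⟨_, _, _, hseg⟩ => hC.exists_shift_mem_liftedComponent hCl hx (.inr rfl)
        (by simp [IsUnitStep]) fun j hj => (hseg j hj).1)
  have hq : x + castPair L (a - d • (1, 0)) ∈ mH := (hH d hdk).2
  obtain rfl : mH = kmerAlong L k p (0, 1) := by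
    by_contra hne
    exact Set.disjoint_left.mp (hC.1.2 hmH hmV hne) hq (hab ▸ (hV d' hd'k).2)
  have hdvd : L ∣ d := dvd_of_mem_kmerAlong_vertical (by simpa using (hH 0 (by omega)).2)
    (by simpa [add_sub_assoc] using hq)
  exact absurd (Nat.le_of_dvd hd hdvd) (by omega)

/-- Every cluster in any jammed configuration of fixed-length non-overlapping
horizontal or vertical k-mers on the `L × L` torus (`k ≤ L`) is a wrapping
(percolating) cluster. -/
theorem jammed_cluster_wraps (L k : ℕ) (hL : 0 < L) (hk : 0 < k) (hkL : k ≤ L)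
    (C : Set (Set (ZMod L × ZMod L))) (hC : IsJammed L k C)
    (Cl : Set (ZMod L × ZMod L)) (hCl : IsCluster L (⋃₀ C) Cl) :
    Wraps L Cl :=
  jammed_cluster_wraps_general L k hL hkL C hC Cl hCl
end
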